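/- Let F be an infinite field with char(F) = p > 2. Then C(UT_2(F), ⋆) = Id(UT_2(F), ⋆) + ⟨z_1z_2⟩^{TS(*)} + ⟨y_1^p⟩^{TS(*)}; that is, a polynomial f ∈ F⟨Y∪Z⟩ is *-central for (UT_2(F), ⋆) if and only if f is a sum of a *-polynomial identity for (UT_2(F), ⋆), an F-linear combination of products uv with u, v skew polynomials, and an F-linear combination of p-th powers g^p with g a symmetric polynomial. -/

import Mathlib

open scoped BigOperators

set_option maxHeartbeats 1000000
set_option synthInstance.maxHeartbeats 400000

/-- The algebra of 2×2 upper triangular matrices over `F`. -/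
def UT2 (F : Type*) [Field F] : Subalgebra F (Matrix (Fin 2) (Fin 2) F) where
  carrier := {M | M 1 0 = 0}
  mul_mem' := by
    intro a b ha hb
    simp only [Set.mem_setOf_eq] at *
    rw [Matrix.mul_apply, Fin.sum_univ_two, ha, hb]
    ring
  one_mem' := by simp [Matrix.one_apply]
  add_mem' := by
    intro a b ha hb
    simp only [Set.mem_setOf_eq] at *
    simp [Matrix.add_apply, ha, hb]
  zero_mem' := by simp
  algebraMap_mem' := by
    intro r
    simp [Matrix.algebraMap_matrix_apply]

theorem mem_UT2 (F : Type*) [Field F] {M : Matrix (Fin 2) (Fin 2) F} :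
    M ∈ UT2 F ↔ M 1 0 = 0 := Iff.rfl

/-- The involution `⋆` on `UT2 F`: `(a c; 0 b) ↦ (b c; 0 a)`. -/
def starUT (F : Type*) [Field F] (M : ↥(UT2 F)) : ↥(UT2 F) :=
  ⟨!![M.1 1 1, M.1 0 1; 0, M.1 0 0], by rw [mem_UT2]; simp⟩

/-- The involution `s` on `UT2 F`: `(a c; 0 b) ↦ (b -c; 0 a)`. -/
def starS (F : Type*) [Field F] (M : ↥(UT2 F)) : ↥(UT2 F) :=
  ⟨!![M.1 1 1, -(M.1 0 1); 0, M.1 0 0], by rw [mem_UT2]; simp⟩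

/-- The free unital associative `F`-algebra `F⟨Y ∪ Z⟩` on the variables
`y_0, y_1, …` (indexed by `Sum.inl`) and `z_0, z_1, …` (indexed by `Sum.inr`). -/
abbrev FA (F : Type*) [Field F] := FreeAlgebra F (ℕ ⊕ ℕ)

noncomputable def yv (F : Type*) [Field F] (i : ℕ) : FA F := FreeAlgebra.ι F (Sum.inl i)
noncomputable def zv (F : Type*) [Field F] (i : ℕ) : FA F := FreeAlgebra.ι F (Sum.inr i)

noncomputable def fStarAux (F : Type*) [Field F] : FA F →ₐ[F] (FA F)ᵐᵒᵖ :=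
  FreeAlgebra.lift F fun v =>
    MulOpposite.op (Sum.elim (fun i => FreeAlgebra.ι F (Sum.inl i))
      (fun i => -FreeAlgebra.ι F (Sum.inr i)) v)

/-- The involution `*` on `F⟨Y ∪ Z⟩`: the unique `F`-linear anti-automorphism
with `y_i* = y_i` and `z_i* = -z_i`. -/
noncomputable def fStar (F : Type*) [Field F] (f : FA F) : FA F := (fStarAux F f).unop

/-- A symmetric polynomial of `F⟨Y ∪ Z⟩`. -/
def IsSym (F : Type*) [Field F] (f : FA F) : Prop := fStar F f = f
/-- A skew polynomial of `F⟨Y ∪ Z⟩`. -/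
def IsSkew (F : Type*) [Field F] (f : FA F) : Prop := fStar F f = -f

/-- A substitution relative to an involution `σ` on `UT2 F`: an algebra homomorphism
sending each `y_i` to a symmetric element and each `z_i` to a skew-symmetric element. -/
def IsSubstWith (F : Type*) [Field F] (σ : ↥(UT2 F) → ↥(UT2 F))
    (φ : FA F →ₐ[F] ↥(UT2 F)) : Prop :=
  (∀ i, σ (φ (yv F i)) = φ (yv F i)) ∧ (∀ i, σ (φ (zv F i)) = -(φ (zv F i)))

/-- The `*`-polynomial identities of `(UT2 F, σ)`. -/
def IdWith (F : Type*) [Field F] (σ : ↥(UT2 F) → ↥(UT2 F)) : Submodule F (FA F) where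
  carrier := {f | ∀ φ : FA F →ₐ[F] ↥(UT2 F), IsSubstWith F σ φ → φ f = 0}
  add_mem' := by
    intro a b ha hb φ hφ
    rw [map_add, ha φ hφ, hb φ hφ, add_zero]
  zero_mem' := by intro φ _; exact map_zero φ
  smul_mem' := by
    intro c x hx φ hφ
    rw [map_smul, hx φ hφ, smul_zero]

/-- The `*`-central polynomials of `(UT2 F, σ)`. -/
def CWith (F : Type*) [Field F] (σ : ↥(UT2 F) → ↥(UT2 F)) : Submodule F (FA F) where
  carrier := {f | ∀ φ : FA F →ₐ[F] ↥(UT2 F), IsSubstWith F σ φ →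
    φ f ∈ Subalgebra.center F ↥(UT2 F)}
  add_mem' := by
    intro a b ha hb φ hφ
    rw [map_add]; exact add_mem (ha φ hφ) (hb φ hφ)
  zero_mem' := by intro φ _; rw [map_zero]; exact zero_mem _
  smul_mem' := by
    intro c x hx φ hφ
    rw [map_smul]; exact Subalgebra.smul_mem _ (hx φ hφ) c

/-- `⟨z₁z₂⟩^{TS(*)}`: the `F`-linear span of all products of two skew polynomials. -/
def TSz (F : Type*) [Field F] : Submodule F (FA F) :=
  Submodule.span F {f : FA F | ∃ u v, IsSkew F u ∧ IsSkew F v ∧ f = u * v}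

/-!
Let `P = abelianize f` be the commutative image of `f` in `F[Y ∪ Z]`. For any substitution `φ`
the diagonal entries of `φ f` are the values of `P` at `(a, b)` and at `(a, -b)`, where `a_i`,
`b_i` are the `(0,0)`-entries of `φ y_i`, `φ z_i`. Hence two central polynomials with the same `P`
differ by an identity, and it suffices to write `P` as the image of an element of
`⟨z₁z₂⟩ + ⟨y₁^p⟩`.

For central `f`, substituting `z_j ↦ diag(b_j, -b_j)` shows that `P` is even in the `z`'s, and
substituting `y_i ↦ a_i + δ_{ik} E₁₂`, `z ↦ 0` turns the `(0,1)`-entry into `∂P₀/∂y_k`, where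
`P₀ = P(y, 0)`; so every exponent in `P₀` is divisible by `p`. Since `abelianize` is onto and
turns `*` into `z ↦ -z`, symmetrising preimages writes each monomial of `P₀` as the image of some
`c g^p` with `g` symmetric, and `P - P₀ = Σ z_j s_j`, with every `s_j` odd in the `z`'s, as the
image of a sum of products `z_j u_j` of skew polynomials.

Conversely, skew elements of `(UT₂, ⋆)` are `diag(x, -x)`, so a product of two is scalar, and a
symmetric element is `x + c E₁₂` with `(c E₁₂)² = 0`, so its `p`-th power is the scalar `x^p`.
-/

open MvPolynomial

section SumVariables

variable {R σ τ : Type*} [CommRing R]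

noncomputable def negInr : MvPolynomial (σ ⊕ τ) R →ₐ[R] MvPolynomial (σ ⊕ τ) R :=
  aeval (Sum.elim (fun i => X (Sum.inl i)) fun j => -X (Sum.inr j))

noncomputable def killInr : MvPolynomial (σ ⊕ τ) R →ₐ[R] MvPolynomial (σ ⊕ τ) R :=
  aeval (Sum.elim (fun i => X (Sum.inl i)) 0)

@[simp] theorem negInr_X_inl (i : σ) :
    negInr (X (Sum.inl i) : MvPolynomial (σ ⊕ τ) R) = X (Sum.inl i) := by
  simp [negInr]

@[simp] theorem negInr_X_inr (j : τ) :
    negInr (X (Sum.inr j) : MvPolynomial (σ ⊕ τ) R) = -X (Sum.inr j) := by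
  simp [negInr]

@[simp] theorem killInr_X_inl (i : σ) :
    killInr (X (Sum.inl i) : MvPolynomial (σ ⊕ τ) R) = X (Sum.inl i) := by
  simp [killInr]

@[simp] theorem killInr_X_inr (j : τ) : killInr (X (Sum.inr j) : MvPolynomial (σ ⊕ τ) R) = 0 := by
  simp [killInr]

theorem negInr_negInr (P : MvPolynomial (σ ⊕ τ) R) : negInr (negInr P) = P := by
  suffices (negInr (R := R) (σ := σ) (τ := τ)).comp negInr = AlgHom.id R _ from
    DFunLike.congr_fun this P
  ext (i | j) <;> simp

theorem negInr_killInr (P : MvPolynomial (σ ⊕ τ) R) : negInr (killInr P) = killInr P := by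
  suffices (negInr (R := R) (σ := σ) (τ := τ)).comp killInr = killInr from
    DFunLike.congr_fun this P
  ext (i | j) <;> simp

theorem killInr_killInr (P : MvPolynomial (σ ⊕ τ) R) : killInr (killInr P) = killInr P := by
  suffices (killInr (R := R) (σ := σ) (τ := τ)).comp killInr = killInr from
    DFunLike.congr_fun this P
  ext (i | j) <;> simp

theorem aeval_negInr {A : Type*} [CommRing A] [Algebra R A] (x : σ ⊕ τ → A)
    (P : MvPolynomial (σ ⊕ τ) R) :
    aeval x (negInr P) = aeval (Sum.elim (x ∘ Sum.inl) (-(x ∘ Sum.inr))) P := by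
  rw [← AlgHom.comp_apply]
  congr 1
  ext (i | j) <;> simp

theorem aeval_killInr {A : Type*} [CommRing A] [Algebra R A] (x : σ ⊕ τ → A)
    (P : MvPolynomial (σ ⊕ τ) R) :
    aeval x (killInr P) = aeval (Sum.elim (x ∘ Sum.inl) 0) P := by
  rw [← AlgHom.comp_apply]
  congr 1
  ext (i | j) <;> simp

theorem pderiv_inr_killInr (j : τ) (P : MvPolynomial (σ ⊕ τ) R) :
    pderiv (Sum.inr j) (killInr P) = 0 := by
  induction P using MvPolynomial.induction_on with
  | C a => simp [killInr]
  | add P Q hP hQ => rw [map_add, map_add, hP, hQ, add_zero]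
  | mul_X P v hP =>
    rcases v with i | k
    · simp [hP]
    · simp

theorem sub_killInr_mem_span_X_inr (P : MvPolynomial (σ ⊕ τ) R) :
    P - killInr P ∈ Ideal.span (Set.range fun j : τ => X (Sum.inr j)) := by
  induction P using MvPolynomial.induction_on with
  | C a => simp [killInr]
  | add P Q hP hQ => simpa [add_sub_add_comm] using add_mem hP hQ
  | mul_X P v hP =>
    have key : P * X v - killInr (P * X v) =
        (P - killInr P) * X v + killInr P * (X v - killInr (X v)) := by
      rw [map_mul]; ring
    rw [key]
    refine add_mem (Ideal.mul_mem_right _ _ hP) (Ideal.mul_mem_left _ _ ?_)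
    rcases v with i | j
    · simp
    · simpa using Ideal.subset_span (Set.mem_range_self j)

end SumVariables

theorem exists_expand_eq_of_pderiv_eq_zero {R σ : Type*} [CommSemiring R] [NoZeroDivisors R]
    (p : ℕ) [CharP R p] {P : MvPolynomial σ R} (hP : ∀ i, pderiv i P = 0) :
    ∃ Q, expand p Q = P := by
  have hdvd : ∀ μ ∈ P.support, ∀ i, p ∣ μ i := by
    intro μ hμ i
    rcases Nat.eq_zero_or_pos (μ i) with h0 | hpos
    · simp [h0]
    have hcoeff := coeff_pderiv (i := i) P (μ - Finsupp.single i 1)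
    rw [hP i, coeff_zero, tsub_add_cancel_of_le (Finsupp.single_le_iff.mpr hpos)] at hcoeff
    have hμi : (((μ - Finsupp.single i 1 : σ →₀ ℕ) i : ℕ) + 1 : R) = (μ i : ℕ) := by
      simp only [Finsupp.tsub_apply, Finsupp.single_eq_same]
      norm_cast
      rw [Nat.sub_add_cancel hpos]
    rw [hμi] at hcoeff
    exact (CharP.cast_eq_zero_iff R p _).mp
      ((mul_eq_zero.mp hcoeff.symm).resolve_left (mem_support_iff.mp hμ))
  suffices P ∈ (expand p).range from this
  rw [P.as_sum]
  refine Subalgebra.sum_mem _ fun μ hμ => ⟨monomial (μ.mapRange (· / p) (Nat.zero_div p))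
    (coeff μ P), ?_⟩
  change expand p _ = _
  rw [expand_monomial]
  congr 2
  ext i
  simp [Nat.mul_div_cancel' (hdvd μ hμ i)]

section Abelianize

variable (R α : Type*) [CommSemiring R]

noncomputable def abelianize : FreeAlgebra R α →ₐ[R] MvPolynomial α R :=
  FreeAlgebra.lift R X

@[simp] theorem abelianize_ι (a : α) : abelianize R α (FreeAlgebra.ι R a) = X a :=
  FreeAlgebra.lift_ι_apply _ _

theorem abelianize_surjective : Function.Surjective (abelianize R α) := by
  rw [← AlgHom.range_eq_top, eq_top_iff, ← adjoin_range_X, Algebra.adjoin_le_iff]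
  rintro _ ⟨a, rfl⟩
  exact ⟨FreeAlgebra.ι R a, abelianize_ι R α a⟩

variable {R α}

theorem aeval_comp_abelianize {A : Type*} [CommSemiring A] [Algebra R A]
    (χ : FreeAlgebra R α →ₐ[R] A) : (aeval (χ ∘ FreeAlgebra.ι R)).comp (abelianize R α) = χ := by
  ext a
  simp

@[simp] theorem aeval_abelianize {A : Type*} [CommSemiring A] [Algebra R A]
    (χ : FreeAlgebra R α →ₐ[R] A) (f : FreeAlgebra R α) :
    aeval (χ ∘ FreeAlgebra.ι R) (abelianize R α f) = χ f :=
  DFunLike.congr_fun (aeval_comp_abelianize χ) f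

end Abelianize

section FreeStar

variable {F : Type*} [Field F]

theorem fStar_add (a b : FA F) : fStar F (a + b) = fStar F a + fStar F b := by
  simp [fStar]

theorem fStar_smul (c : F) (a : FA F) : fStar F (c • a) = c • fStar F a := by
  simp [fStar]

theorem fStar_neg (a : FA F) : fStar F (-a) = -fStar F a := by
  simp [fStar]

theorem fStar_sub (a b : FA F) : fStar F (a - b) = fStar F a - fStar F b := by
  simp [fStar]

theorem fStar_mul (a b : FA F) : fStar F (a * b) = fStar F b * fStar F a := by
  simp [fStar]

theorem fStar_algebraMap (r : F) : fStar F (algebraMap F (FA F) r) = algebraMap F (FA F) r := by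
  simp [fStar, MulOpposite.algebraMap_apply]

@[simp] theorem fStar_ι_inl (i : ℕ) :
    fStar F (FreeAlgebra.ι F (Sum.inl i)) = FreeAlgebra.ι F (Sum.inl i) := by
  simp [fStar, fStarAux]

@[simp] theorem fStar_ι_inr (i : ℕ) :
    fStar F (FreeAlgebra.ι F (Sum.inr i)) = -FreeAlgebra.ι F (Sum.inr i) := by
  simp [fStar, fStarAux]

theorem fStar_fStar (f : FA F) : fStar F (fStar F f) = f := by
  induction f using FreeAlgebra.induction with
  | grade0 r => rw [fStar_algebraMap, fStar_algebraMap]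
  | grade1 x => rcases x with i | i <;> simp [fStar_neg]
  | mul a b ha hb => rw [fStar_mul, fStar_mul, ha, hb]
  | add a b ha hb => rw [fStar_add, fStar_add, ha, hb]

theorem abelianize_fStar (f : FA F) :
    abelianize F _ (fStar F f) = negInr (abelianize F _ f) := by
  induction f using FreeAlgebra.induction with
  | grade0 r => simp [fStar_algebraMap]
  | grade1 x => rcases x with i | i <;> simp
  | mul a b ha hb => rw [fStar_mul, map_mul, map_mul, map_mul, ha, hb, mul_comm]
  | add a b ha hb => rw [fStar_add, map_add, map_add, map_add, ha, hb]

theorem exists_isSym_abelianize_eq (h2 : (2 : F) ≠ 0) {r : MvPolynomial (ℕ ⊕ ℕ) F}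
    (hr : negInr r = r) : ∃ g, IsSym F g ∧ abelianize F _ g = r := by
  obtain ⟨h, rfl⟩ := abelianize_surjective F _ r
  refine ⟨(2 : F)⁻¹ • (h + fStar F h), ?_, ?_⟩
  · rw [IsSym, fStar_smul, fStar_add, fStar_fStar, add_comm]
  · rw [map_smul, map_add, abelianize_fStar, hr, ← two_smul F, smul_smul, inv_mul_cancel₀ h2,
      one_smul]

theorem exists_isSkew_abelianize_eq (h2 : (2 : F) ≠ 0) {r : MvPolynomial (ℕ ⊕ ℕ) F}
    (hr : negInr r = -r) : ∃ u, IsSkew F u ∧ abelianize F _ u = r := by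
  obtain ⟨h, rfl⟩ := abelianize_surjective F _ r
  refine ⟨(2 : F)⁻¹ • (h - fStar F h), ?_, ?_⟩
  · rw [IsSkew, fStar_smul, fStar_sub, fStar_fStar, ← smul_neg, neg_sub]
  · rw [map_smul, map_sub, abelianize_fStar, hr, sub_neg_eq_add, ← two_smul F, smul_smul,
      inv_mul_cancel₀ h2, one_smul]

end FreeStar

namespace UT2

variable {F : Type*} [Field F]

def mk (a c b : F) : ↥(UT2 F) :=
  ⟨!![a, c; 0, b], by rw [mem_UT2]; simp⟩

@[simp] theorem mk_apply_zero_zero (a c b : F) : (mk a c b).1 0 0 = a := by simp [mk]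
@[simp] theorem mk_apply_zero_one (a c b : F) : (mk a c b).1 0 1 = c := by simp [mk]
@[simp] theorem mk_apply_one_one (a c b : F) : (mk a c b).1 1 1 = b := by simp [mk]

theorem apply_one_zero (M : ↥(UT2 F)) : M.1 1 0 = 0 := M.2

theorem ext_of_apply {M N : ↥(UT2 F)} (h00 : M.1 0 0 = N.1 0 0) (h01 : M.1 0 1 = N.1 0 1)
    (h11 : M.1 1 1 = N.1 1 1) : M = N := by
  apply Subtype.ext
  ext i j
  fin_cases i <;> fin_cases j
  exacts [h00, h01, (apply_one_zero M).trans (apply_one_zero N).symm, h11]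

@[simp] theorem mul_apply_zero_zero (M N : ↥(UT2 F)) : (M * N).1 0 0 = M.1 0 0 * N.1 0 0 := by
  simp [Matrix.mul_apply, Fin.sum_univ_two, apply_one_zero]

@[simp] theorem mul_apply_one_one (M N : ↥(UT2 F)) : (M * N).1 1 1 = M.1 1 1 * N.1 1 1 := by
  simp [Matrix.mul_apply, Fin.sum_univ_two, apply_one_zero]

@[simp] theorem mul_apply_zero_one (M N : ↥(UT2 F)) :
    (M * N).1 0 1 = M.1 0 0 * N.1 0 1 + M.1 0 1 * N.1 1 1 := by
  simp [Matrix.mul_apply, Fin.sum_univ_two]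

@[simp] theorem algebraMap_apply (r : F) (i j : Fin 2) :
    (algebraMap F ↥(UT2 F) r).1 i j = if i = j then r else 0 := by
  simp [Matrix.algebraMap_matrix_apply]

def diag0 : ↥(UT2 F) →ₐ[F] F where
  toFun M := M.1 0 0
  map_one' := by simp
  map_mul' := mul_apply_zero_zero
  map_zero' := rfl
  map_add' _ _ := rfl
  commutes' r := by simp

def diag1 : ↥(UT2 F) →ₐ[F] F where
  toFun M := M.1 1 1
  map_one' := by simp
  map_mul' := mul_apply_one_one
  map_zero' := rfl
  map_add' _ _ := rfl
  commutes' r := by simp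

@[simp] theorem diag0_apply (M : ↥(UT2 F)) : diag0 M = M.1 0 0 := rfl
@[simp] theorem diag1_apply (M : ↥(UT2 F)) : diag1 M = M.1 1 1 := rfl

theorem mem_center_iff (M : ↥(UT2 F)) :
    M ∈ Subalgebra.center F ↥(UT2 F) ↔ M.1 0 1 = 0 ∧ M.1 0 0 = M.1 1 1 := by
  rw [Subalgebra.mem_center_iff]
  constructor
  · intro h
    have hD := congrArg (fun N : ↥(UT2 F) => N.1 0 1) (h (mk 1 0 0))
    have hE := congrArg (fun N : ↥(UT2 F) => N.1 0 1) (h (mk 0 1 0))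
    simp only [mul_apply_zero_one, mk_apply_zero_zero, mk_apply_zero_one,
      mk_apply_one_one] at hD hE
    exact ⟨by linear_combination hD, by linear_combination -hE⟩
  · rintro ⟨h01, h00⟩ N
    apply ext_of_apply <;> simp [h01, h00, mul_comm]

theorem pow_mem_center_of_apply_eq (p : ℕ) [CharP F p] (hp : 2 ≤ p)
    {M : ↥(UT2 F)} (hM : M.1 0 0 = M.1 1 1) : M ^ p ∈ Subalgebra.center F ↥(UT2 F) := by
  have := Fact.mk (CharP.char_is_prime_of_two_le F p hp)
  have := charP_of_injective_algebraMap (algebraMap F ↥(UT2 F)).injective p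
  set N := M - algebraMap F ↥(UT2 F) (M.1 0 0)
  have hN : N ^ 2 = 0 := by
    rw [sq]
    apply ext_of_apply <;> simp [N, hM, Matrix.algebraMap_matrix_apply]
  rw [← sub_add_cancel M (algebraMap F _ (M.1 0 0)), add_comm,
    add_pow_char_of_commute p (Algebra.commutes _ N), pow_eq_zero_of_le hp hN, add_zero,
    ← map_pow]
  exact Subalgebra.algebraMap_mem _ _

end UT2

section Star

variable {F : Type*} [Field F]

@[simp] theorem starUT_apply_zero_zero (M : ↥(UT2 F)) : (starUT F M).1 0 0 = M.1 1 1 := by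
  simp [starUT]
@[simp] theorem starUT_apply_zero_one (M : ↥(UT2 F)) : (starUT F M).1 0 1 = M.1 0 1 := by
  simp [starUT]
@[simp] theorem starUT_apply_one_one (M : ↥(UT2 F)) : (starUT F M).1 1 1 = M.1 0 0 := by
  simp [starUT]

def starUTHom : ↥(UT2 F) →ₐ[F] (↥(UT2 F))ᵐᵒᵖ where
  toFun M := MulOpposite.op (starUT F M)
  map_one' := congrArg _ (UT2.ext_of_apply (by simp) (by simp) (by simp))
  map_mul' M N := MulOpposite.unop_injective <|
    UT2.ext_of_apply (by simp [mul_comm]) (by simp; ring) (by simp [mul_comm])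
  map_zero' := congrArg _ (UT2.ext_of_apply (by simp) (by simp) (by simp))
  map_add' M N := MulOpposite.unop_injective <|
    UT2.ext_of_apply (by simp) (by simp) (by simp)
  commutes' r := MulOpposite.unop_injective <|
    UT2.ext_of_apply (by simp) (by simp) (by simp)

theorem starUT_eq_self_iff (M : ↥(UT2 F)) : starUT F M = M ↔ M.1 0 0 = M.1 1 1 := by
  refine ⟨fun h => ?_, fun h => UT2.ext_of_apply (by simp [h]) (by simp) (by simp [h])⟩
  simpa using congrArg (fun N : ↥(UT2 F) => N.1 1 1) h

theorem apply_eq_of_starUT_eq_neg (h2 : (2 : F) ≠ 0) {M : ↥(UT2 F)} (h : starUT F M = -M) :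
    M.1 0 1 = 0 ∧ M.1 1 1 = -M.1 0 0 := by
  constructor
  · have h01 := congrArg (fun N : ↥(UT2 F) => N.1 0 1) h
    simp only [starUT_apply_zero_one] at h01
    have : (2 : F) * M.1 0 1 = 0 := by
      change M.1 0 1 = -M.1 0 1 at h01
      linear_combination h01
    exact (mul_eq_zero.mp this).resolve_left h2
  · simpa using congrArg (fun N : ↥(UT2 F) => N.1 0 0) h

end Star

section Substitution

variable {F : Type*} [Field F] {φ : FA F →ₐ[F] ↥(UT2 F)}

theorem IsSubstWith.map_fStar (hφ : IsSubstWith F (starUT F) φ) (f : FA F) :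
    φ (fStar F f) = starUT F (φ f) := by
  have h : (AlgHom.op φ).comp (fStarAux F) = starUTHom.comp φ := by
    ext (i | i)
    · simpa [fStarAux, starUTHom, yv, zv] using congrArg MulOpposite.op (hφ.1 i).symm
    · simpa [fStarAux, starUTHom, yv, zv] using congrArg MulOpposite.op (hφ.2 i).symm
  exact congrArg MulOpposite.unop (DFunLike.congr_fun h f)

theorem IsSubstWith.apply_eq_of_isSym (hφ : IsSubstWith F (starUT F) φ) {g : FA F}
    (hg : IsSym F g) : (φ g).1 0 0 = (φ g).1 1 1 := by
  rw [← starUT_eq_self_iff, ← hφ.map_fStar, hg]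

theorem IsSubstWith.apply_eq_of_isSkew (h2 : (2 : F) ≠ 0) (hφ : IsSubstWith F (starUT F) φ)
    {u : FA F} (hu : IsSkew F u) : (φ u).1 0 1 = 0 ∧ (φ u).1 1 1 = -(φ u).1 0 0 := by
  exact apply_eq_of_starUT_eq_neg h2 (by rw [← hφ.map_fStar, hu, map_neg])

end Substitution

section CentralPolynomials

variable {F : Type*} [Field F]

def symPowSpan (F : Type*) [Field F] (p : ℕ) : Submodule F (FA F) :=
  Submodule.span F {f : FA F | ∃ g, IsSym F g ∧ f = g ^ p}

theorem IdWith_le_CWith : IdWith F (starUT F) ≤ CWith F (starUT F) := fun f hf φ hφ => by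
  rw [hf φ hφ]
  exact zero_mem _

theorem TSz_le_CWith (h2 : (2 : F) ≠ 0) : TSz F ≤ CWith F (starUT F) := by
  refine Submodule.span_le.mpr ?_
  rintro _ ⟨u, v, hu, hv, rfl⟩ φ hφ
  obtain ⟨hu01, hu11⟩ := hφ.apply_eq_of_isSkew h2 hu
  obtain ⟨hv01, hv11⟩ := hφ.apply_eq_of_isSkew h2 hv
  rw [UT2.mem_center_iff]
  simp [hu01, hu11, hv01, hv11]

theorem symPowSpan_le_CWith (p : ℕ) [CharP F p] (hp : 2 ≤ p) :
    symPowSpan F p ≤ CWith F (starUT F) := by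
  refine Submodule.span_le.mpr ?_
  rintro _ ⟨g, hg, rfl⟩ φ hφ
  rw [map_pow]
  exact UT2.pow_mem_center_of_apply_eq p hp (hφ.apply_eq_of_isSym hg)

end CentralPolynomials

section GenericSubstitution

variable {F : Type*} [Field F]

noncomputable def substOf (a c b : ℕ → F) : FA F →ₐ[F] ↥(UT2 F) :=
  FreeAlgebra.lift F (Sum.elim (fun i => UT2.mk (a i) (c i) (a i)) fun j => UT2.mk (b j) 0 (-b j))

theorem isSubstWith_substOf (a c b : ℕ → F) : IsSubstWith F (starUT F) (substOf a c b) := by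
  refine ⟨fun i => ?_, fun j => ?_⟩
  · rw [starUT_eq_self_iff]
    simp [substOf, yv]
  · apply UT2.ext_of_apply <;> simp [substOf, zv]

theorem substOf_apply_zero_zero (a c b : ℕ → F) (f : FA F) :
    (substOf a c b f).1 0 0 = aeval (Sum.elim a b) (abelianize F _ f) := by
  have h : UT2.diag0.comp (substOf a c b) ∘ FreeAlgebra.ι F = Sum.elim a b := by
    ext (i | j) <;> simp [substOf]
  rw [← h, aeval_abelianize]
  rfl

theorem substOf_apply_one_one (a c b : ℕ → F) (f : FA F) :
    (substOf a c b f).1 1 1 = aeval (Sum.elim a (-b)) (abelianize F _ f) := by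
  have h : UT2.diag1.comp (substOf a c b) ∘ FreeAlgebra.ι F = Sum.elim a (-b) := by
    ext (i | j) <;> simp [substOf]
  rw [← h, aeval_abelianize]
  rfl

/-- With `z ↦ 0` both diagonal entries are `killInr ∘ abelianize`, and the `(0,1)`-entry of a
product, `M₀₀ N₀₁ + M₀₁ N₁₁`, becomes the Leibniz rule. -/
theorem substOf_single_apply_zero_one (x : ℕ ⊕ ℕ → F) (i : ℕ) (f : FA F) :
    (substOf (x ∘ Sum.inl) (Pi.single i 1) 0 f).1 0 1 =
      aeval x (pderiv (Sum.inl i) (killInr (abelianize F _ f))) := by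
  induction f using FreeAlgebra.induction with
  | grade0 r => simp
  | grade1 v =>
    rcases v with k | k
    · by_cases hk : k = i
      · subst hk; simp [substOf]
      · simp [substOf, hk, Pi.single_apply, pderiv_X_of_ne (Sum.inl_injective.ne hk)]
    · simp [substOf]
  | mul f g hf hg =>
    simp only [map_mul, UT2.mul_apply_zero_one, hf, hg, pderiv_mul, map_add,
      substOf_apply_zero_zero, substOf_apply_one_one, aeval_killInr, neg_zero]
    ring
  | add f g hf hg =>
    simp [hf, hg]

end GenericSubstitution

section AbelianizationOfCentral

variable {F : Type*} [Field F] {f : FA F}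

theorem negInr_abelianize_of_mem_CWith [Infinite F]
    (hf : f ∈ CWith F (starUT F)) : negInr (abelianize F _ f) = abelianize F _ f := by
  refine MvPolynomial.funext fun x => ?_
  have h := ((UT2.mem_center_iff _).mp
    (hf _ (isSubstWith_substOf (x ∘ Sum.inl) 0 (x ∘ Sum.inr)))).2
  rw [substOf_apply_zero_zero, substOf_apply_one_one, Sum.elim_comp_inl_inr] at h
  change aeval x _ = aeval x _
  rw [aeval_negInr, h]

theorem pderiv_killInr_abelianize_of_mem_CWith [Infinite F]
    (hf : f ∈ CWith F (starUT F)) (v : ℕ ⊕ ℕ) :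
    pderiv v (killInr (abelianize F _ f)) = 0 := by
  rcases v with i | j
  · refine MvPolynomial.funext fun x => ?_
    have h := ((UT2.mem_center_iff _).mp
      (hf _ (isSubstWith_substOf (x ∘ Sum.inl) (Pi.single i 1) 0))).1
    rw [substOf_single_apply_zero_one] at h
    change aeval x _ = aeval x 0
    rw [h, map_zero]
  · exact pderiv_inr_killInr j _

theorem sub_mem_IdWith_of_abelianize_eq {g : FA F} (hf : f ∈ CWith F (starUT F))
    (hg : g ∈ CWith F (starUT F)) (hfg : abelianize F _ f = abelianize F _ g) :
    f - g ∈ IdWith F (starUT F) := by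
  intro φ hφ
  obtain ⟨hf01, hf00⟩ := (UT2.mem_center_iff _).mp (hf φ hφ)
  obtain ⟨hg01, hg00⟩ := (UT2.mem_center_iff _).mp (hg φ hφ)
  have h00 : (φ f).1 0 0 = (φ g).1 0 0 := by
    simpa only [aeval_abelianize, AlgHom.comp_apply, UT2.diag0_apply] using
      congrArg (aeval (UT2.diag0.comp φ ∘ FreeAlgebra.ι F)) hfg
  rw [map_sub, sub_eq_zero]
  exact UT2.ext_of_apply h00 (hf01.trans hg01.symm) (hf00.symm.trans (h00.trans hg00))

theorem killInr_expand_mem_map_symPowSpan (h2 : (2 : F) ≠ 0) (p : ℕ)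
    (Q : MvPolynomial (ℕ ⊕ ℕ) F) :
    killInr (expand p Q) ∈ (symPowSpan F p).map (abelianize F _).toLinearMap := by
  induction Q using MvPolynomial.induction_on' with
  | monomial μ c =>
    obtain ⟨g, hg, hgμ⟩ := exists_isSym_abelianize_eq h2 (negInr_killInr (monomial μ (1 : F)))
    refine ⟨c • g ^ p, Submodule.smul_mem _ c (Submodule.subset_span ⟨g, hg, rfl⟩), ?_⟩
    rw [AlgHom.toLinearMap_apply, map_smul, map_pow, hgμ, expand_monomial, ← map_pow, ← map_smul,
      monomial_pow, one_pow, smul_monomial, smul_eq_mul, mul_one]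
  | add Q R hQ hR => rw [map_add, map_add]; exact add_mem hQ hR

theorem add_negInr_mem_map_TSz (h2 : (2 : F) ≠ 0) {P : MvPolynomial (ℕ ⊕ ℕ) F}
    (hP : P ∈ Ideal.span (Set.range fun j : ℕ => X (Sum.inr j))) :
    P + negInr P ∈ (TSz F).map (abelianize F _).toLinearMap := by
  obtain ⟨c, rfl⟩ := Finsupp.mem_ideal_span_range_iff_exists_finsupp.mp hP
  rw [map_finsuppSum, ← Finsupp.sum_add]
  refine Submodule.finsuppSum_mem _ _ _ _ fun j _ => ?_
  obtain ⟨u, hu, hua⟩ := exists_isSkew_abelianize_eq h2 (r := c j - negInr (c j))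
    (by rw [map_sub, negInr_negInr, neg_sub])
  refine ⟨u * zv F j, Submodule.subset_span ⟨u, zv F j, hu, by simp [IsSkew, zv], rfl⟩, ?_⟩
  simp [hua, zv]
  ring

theorem abelianize_mem_map_of_mem_CWith [Infinite F] (p : ℕ) [CharP F p] (h2 : (2 : F) ≠ 0)
    (hf : f ∈ CWith F (starUT F)) :
    abelianize F _ f ∈ (TSz F ⊔ symPowSpan F p).map (abelianize F _).toLinearMap := by
  set P := abelianize F _ f
  obtain ⟨Q, hQ⟩ := exists_expand_eq_of_pderiv_eq_zero p
    (pderiv_killInr_abelianize_of_mem_CWith hf)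
  rw [Submodule.map_sup, ← sub_add_cancel P (killInr P)]
  refine Submodule.add_mem_sup ?_ ?_
  · have hν : negInr (P - killInr P) = P - killInr P := by
      rw [map_sub, negInr_abelianize_of_mem_CWith hf, negInr_killInr]
    have h := Submodule.smul_mem _ (2 : F)⁻¹
      (add_negInr_mem_map_TSz h2 (sub_killInr_mem_span_X_inr P))
    rwa [hν, ← two_smul F, smul_smul, inv_mul_cancel₀ h2, one_smul] at h
  · rw [← killInr_killInr, ← hQ]
    exact killInr_expand_mem_map_symPowSpan h2 p Q

end AbelianizationOfCentral

theorem stmt_10 (F : Type*) [Field F] [Infinite F] (p : ℕ) [CharP F p] (hp : 2 < p) :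
    CWith F (starUT F) = IdWith F (starUT F) ⊔ TSz F ⊔
      Submodule.span F {f : FA F | ∃ g, IsSym F g ∧ f = g ^ p} := by
  have h2 : (2 : F) ≠ 0 := Ring.two_ne_zero (by rw [ringChar.eq F p]; omega)
  have hTP : TSz F ⊔ symPowSpan F p ≤ CWith F (starUT F) :=
    sup_le (TSz_le_CWith h2) (symPowSpan_le_CWith p hp.le)
  rw [sup_assoc]
  refine le_antisymm (fun f hf => ?_) (sup_le IdWith_le_CWith hTP)
  obtain ⟨g, hg, hgf⟩ := Submodule.mem_map.mp (abelianize_mem_map_of_mem_CWith p h2 hf)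
  have hId : f - g ∈ IdWith F (starUT F) := sub_mem_IdWith_of_abelianize_eq hf (hTP hg) hgf.symm
  rw [← sub_add_cancel f g]
  exact Submodule.add_mem_sup hId hg
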